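/- arXiv:2605.07120 — 2 statements merged into one kernel-verified Lean document; each statement's English description precedes it below -/
import Mathlib

section
/- Let G and M be symmetric positive semidefinite n×n matrices, and let c_G and c_M be the unique minimizers over [0,1]^n of D_G and D_M respectively. Then ‖c_G − c_M‖₂ ≤ ‖G − M‖_op / (4·λ·√n), where ‖·‖_op is the operator (spectral) norm. -/
open Matrix Set

/-- Binary entropy potential, with Lean's convention `Real.log 0 = 0`. -/
noncomputable def phiEnt (c : ℝ) : ℝ := c * Real.log c + (1 - c) * Real.log (1 - c)

/-- The dual objective
`D_K(c) = (1/n)·∑ᵢ φ(cᵢ) + (1/(2λn²))·(y⊙c)ᵀ K (y⊙c)`. -/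
noncomputable def dualObj {n : ℕ} (lam : ℝ) (y : Fin n → ℝ)
    (K : Matrix (Fin n) (Fin n) ℝ) (c : Fin n → ℝ) : ℝ :=
  (1 / n) * ∑ i, phiEnt (c i) +
    (1 / (2 * lam * (n : ℝ) ^ 2)) * ((fun i => y i * c i) ⬝ᵥ (K *ᵥ fun i => y i * c i))

/-- Operator (spectral) norm of a real square matrix, i.e. the norm of the induced
continuous linear endomorphism of Euclidean space. -/
noncomputable def opNorm {n : ℕ} (A : Matrix (Fin n) (Fin n) ℝ) : ℝ :=
  ‖(Matrix.toEuclideanCLM (𝕜 := ℝ) A :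
      EuclideanSpace ℝ (Fin n) →L[ℝ] EuclideanSpace ℝ (Fin n))‖

/-- Euclidean (ℓ²) norm of a vector. -/
noncomputable def e2norm {n : ℕ} (v : Fin n → ℝ) : ℝ := Real.sqrt (∑ i, (v i) ^ 2)

/-!
Since `φ'' = 1/c + 1/(1-c) ≥ 4` and `K` is positive semidefinite, `D_K` is `(4/n)`-strongly
convex on the cube for the Euclidean norm, so its minimiser `c*` satisfies the quadratic growth
`D_K c* + (2/n)‖c - c*‖² ≤ D_K c`. Adding the growth inequalities of `D_G` at `c_G` and of `D_M`
at `c_M` bounds `(4/n)‖c_G - c_M‖²` by `(D_G - D_M)(c_M) - (D_G - D_M)(c_G)`, which is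
`1/(2λn²)` times a difference of two values of the quadratic form of `G - M`. As `G - M` is
symmetric this difference factors as `(y⊙(c_M - c_G))ᵀ (G - M) (y⊙(c_M + c_G))`, which is at most
`‖G - M‖_op · ‖c_G - c_M‖ · 2√n` because `|yᵢ| = 1` and `c_M + c_G ∈ [0,2]ⁿ`.
-/

open Filter Topology

theorem le_div_of_mul_sq_le_mul {m L s : ℝ} (hm : 0 < m) (hL : 0 ≤ L) (hs : 0 ≤ s)
    (h : m * s ^ 2 ≤ L * s) : s ≤ L / m := by
  rw [le_div_iff₀ hm]
  rcases hs.eq_or_lt with rfl | hs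
  · simpa using hL
  · exact le_of_mul_le_mul_right (by linarith) hs

theorem StrongConvexOn.add_sq_norm_sub_le_of_isMinOn {E : Type*} [NormedAddCommGroup E]
    [NormedSpace ℝ E] {s : Set E} {m : ℝ} {f : E → ℝ} {x y : E}
    (hf : StrongConvexOn s m f) (hmin : IsMinOn f s x) (hx : x ∈ s) (hy : y ∈ s) :
    f x + m / 2 * ‖y - x‖ ^ 2 ≤ f y := by
  have hseg : ∀ t ∈ Ioo (0 : ℝ) 1, f x + (1 - t) * (m / 2 * ‖y - x‖ ^ 2) ≤ f y := by
    rintro t ⟨ht0, ht1⟩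
    have hmem : t • y + (1 - t) • x ∈ s := hf.1 hy hx ht0.le (by linarith) (by ring)
    have hconv := hf.2 hy hx ht0.le (by linarith : (0 : ℝ) ≤ 1 - t) (by ring)
    have hle := isMinOn_iff.1 hmin _ hmem
    simp only [smul_eq_mul] at hconv
    have hscaled : t * (f x + (1 - t) * (m / 2 * ‖y - x‖ ^ 2)) ≤ t * f y := by linarith
    exact le_of_mul_le_mul_left hscaled ht0
  have hlim : Tendsto (fun t : ℝ => f x + (1 - t) * (m / 2 * ‖y - x‖ ^ 2)) (𝓝[>] 0)
      (𝓝 (f x + m / 2 * ‖y - x‖ ^ 2)) :=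
    tendsto_nhdsWithin_of_tendsto_nhds (Continuous.tendsto' (by fun_prop) 0 _ (by simp))
  exact le_of_tendsto hlim (eventually_of_mem (Ioo_mem_nhdsGT one_pos) hseg)

theorem StrongConvexOn.mul_sq_norm_sub_le_of_isMinOn {E : Type*} [NormedAddCommGroup E]
    [NormedSpace ℝ E] {s : Set E} {m : ℝ} {f g : E → ℝ} {x y : E}
    (hf : StrongConvexOn s m f) (hg : StrongConvexOn s m g)
    (hfx : IsMinOn f s x) (hgy : IsMinOn g s y) (hx : x ∈ s) (hy : y ∈ s) :
    m * ‖x - y‖ ^ 2 ≤ (f y - g y) - (f x - g x) := by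
  have h₁ := hf.add_sq_norm_sub_le_of_isMinOn hfx hx hy
  have h₂ := hg.add_sq_norm_sub_le_of_isMinOn hgy hy hx
  rw [norm_sub_rev] at h₁
  linarith

theorem ConvexOn.sum_comp_apply {ι E : Type*} [Fintype ι] [AddCommGroup E] [Module ℝ E]
    {s : Set E} {g : E → ℝ} (hg : ConvexOn ℝ s g) :
    ConvexOn ℝ (univ.pi fun _ => s) (fun x : ι → E => ∑ i, g (x i)) := by
  refine ⟨convex_pi fun i _ => hg.1, fun x hx y hy a b ha hb hab => ?_⟩
  calc ∑ i, g ((a • x + b • y) i) ≤ ∑ i, (a • g (x i) + b • g (y i)) :=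
        Finset.sum_le_sum fun i _ => hg.2 (hx i trivial) (hy i trivial) ha hb hab
    _ = a • ∑ i, g (x i) + b • ∑ i, g (y i) := by
        rw [Finset.sum_add_distrib, Finset.smul_sum, Finset.smul_sum]

theorem Matrix.PosSemidef.convexOn_dotProduct_mulVec {ι : Type*} [Fintype ι]
    {A : Matrix ι ι ℝ} (hA : A.PosSemidef) : ConvexOn ℝ univ fun v => v ⬝ᵥ (A *ᵥ v) := by
  refine ⟨convex_univ, fun u _ v _ a b ha hb hab => ?_⟩
  have hdiff : 0 ≤ (u - v) ⬝ᵥ (A *ᵥ (u - v)) := by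
    simpa using hA.dotProduct_mulVec_nonneg (u - v)
  have hexp : (a • u + b • v) ⬝ᵥ (A *ᵥ (a • u + b • v)) =
      a • (u ⬝ᵥ (A *ᵥ u)) + b • (v ⬝ᵥ (A *ᵥ v)) - a * b * ((u - v) ⬝ᵥ (A *ᵥ (u - v))) := by
    obtain rfl : b = 1 - a := by linarith
    simp only [mulVec_add, mulVec_smul, mulVec_sub, dotProduct_add, add_dotProduct,
      dotProduct_smul, smul_dotProduct, dotProduct_sub, sub_dotProduct, smul_eq_mul]
    ring
  dsimp only
  rw [hexp]
  nlinarith [mul_nonneg ha hb]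

theorem Matrix.IsSymm.dotProduct_mulVec_sub_dotProduct_mulVec {ι : Type*} [Fintype ι]
    {A : Matrix ι ι ℝ} (hA : A.IsSymm) (u w : ι → ℝ) :
    u ⬝ᵥ (A *ᵥ u) - w ⬝ᵥ (A *ᵥ w) = (u - w) ⬝ᵥ (A *ᵥ (u + w)) := by
  have hswap : w ⬝ᵥ (A *ᵥ u) = u ⬝ᵥ (A *ᵥ w) := by
    rw [← dotProduct_transpose_mulVec, hA.eq]
  simp only [mulVec_add, dotProduct_add, sub_dotProduct]
  linarith

theorem phiEnt_eq_neg_binEntropy : phiEnt = fun c => -Real.binEntropy c := by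
  funext c
  simp only [phiEnt, Real.binEntropy, Real.log_inv]
  ring

theorem convexOn_phiEnt_sub_two_mul_sq :
    ConvexOn ℝ (Icc 0 1) fun c => phiEnt c - 2 * c ^ 2 := by
  refine convexOn_of_hasDerivWithinAt2_nonneg (convex_Icc 0 1)
    (f' := fun c => Real.log c - Real.log (1 - c) - 4 * c)
    (f'' := fun c => c⁻¹ + (1 - c)⁻¹ - 4) ?_ ?_ ?_ ?_
  · rw [phiEnt_eq_neg_binEntropy]
    fun_prop
  · rw [interior_Icc]
    rintro c ⟨hc0, hc1⟩
    have hφ := (Real.hasDerivAt_binEntropy hc0.ne' hc1.ne).neg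
    rw [phiEnt_eq_neg_binEntropy]
    exact ((hφ.sub ((hasDerivAt_pow 2 c).const_mul 2)).congr_deriv (by ring)).hasDerivWithinAt
  · rw [interior_Icc]
    rintro c ⟨hc0, hc1⟩
    have hlog₁ := Real.hasDerivAt_log hc0.ne'
    have hlog₂ := ((hasDerivAt_id c).const_sub 1).log (sub_ne_zero.2 hc1.ne')
    exact (((hlog₁.sub hlog₂).sub ((hasDerivAt_id c).const_mul 4)).congr_deriv
      (by simp only [id]; field_simp; ring)).hasDerivWithinAt
  · rw [interior_Icc]
    rintro c ⟨hc0, hc1⟩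
    have hc1' : 0 < 1 - c := sub_pos.2 hc1
    have hsq : c⁻¹ + (1 - c)⁻¹ - 4 = (2 * c - 1) ^ 2 / (c * (1 - c)) := by field_simp; ring
    rw [hsq]
    positivity

section e2norm

variable {n : ℕ}

theorem e2norm_nonneg (v : Fin n → ℝ) : 0 ≤ e2norm v := Real.sqrt_nonneg _

theorem e2norm_eq_norm_toLp (v : Fin n → ℝ) :
    e2norm v = ‖(WithLp.toLp 2 v : EuclideanSpace ℝ (Fin n))‖ := by
  simp [e2norm, EuclideanSpace.norm_eq]

theorem e2norm_sub_comm (u v : Fin n → ℝ) : e2norm (u - v) = e2norm (v - u) := by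
  simp only [e2norm_eq_norm_toLp, WithLp.toLp_sub, norm_sub_rev]

theorem e2norm_mul_of_abs_eq_one {y : Fin n → ℝ} (hy : ∀ i, |y i| = 1) (v : Fin n → ℝ) :
    e2norm (y * v) = e2norm v := by
  simp only [e2norm, Pi.mul_apply, mul_pow, ← sq_abs (y _), hy, one_pow, one_mul]

theorem e2norm_le_sqrt_mul {v : Fin n → ℝ} {a : ℝ} (ha : 0 ≤ a) (hv : ∀ i, |v i| ≤ a) :
    e2norm v ≤ √n * a := by
  calc e2norm v ≤ √(∑ _ : Fin n, a ^ 2) :=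
        Real.sqrt_le_sqrt (Finset.sum_le_sum fun i _ => sq_le_sq.2 ((hv i).trans (le_abs_self a)))
    _ = √n * a := by
        rw [Finset.sum_const, Finset.card_univ, Fintype.card_fin, nsmul_eq_mul,
          Real.sqrt_mul n.cast_nonneg, Real.sqrt_sq ha]

theorem e2norm_mul_add_le {y u v : Fin n → ℝ} (hy : ∀ i, |y i| = 1)
    (hu : ∀ i, u i ∈ Icc 0 1) (hv : ∀ i, v i ∈ Icc 0 1) : e2norm (y * (u + v)) ≤ √n * 2 := by
  refine e2norm_le_sqrt_mul zero_le_two fun i => ?_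
  rw [Pi.mul_apply, abs_mul, hy, one_mul, Pi.add_apply]
  exact abs_le.2 ⟨by linarith [(hu i).1, (hv i).1], by linarith [(hu i).2, (hv i).2]⟩

theorem dotProduct_mulVec_le_opNorm_mul (A : Matrix (Fin n) (Fin n) ℝ) (u w : Fin n → ℝ) :
    u ⬝ᵥ (A *ᵥ w) ≤ opNorm A * (e2norm u * e2norm w) := by
  set T : EuclideanSpace ℝ (Fin n) →L[ℝ] EuclideanSpace ℝ (Fin n) := toEuclideanCLM (𝕜 := ℝ) A
  calc u ⬝ᵥ (A *ᵥ w) = inner ℝ (WithLp.toLp 2 u) (T (WithLp.toLp 2 w)) := by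
        simp [T, EuclideanSpace.inner_toLp_toLp, dotProduct_comm]
    _ ≤ ‖WithLp.toLp 2 u‖ * (‖T‖ * ‖WithLp.toLp 2 w‖) :=
        (real_inner_le_norm _ _).trans (by gcongr; exact T.le_opNorm _)
    _ = opNorm A * (e2norm u * e2norm w) := by
        rw [opNorm, e2norm_eq_norm_toLp, e2norm_eq_norm_toLp]
        ring

end e2norm

section dualObj

variable {n : ℕ} {lam : ℝ} (y : Fin n → ℝ) {K : Matrix (Fin n) (Fin n) ℝ}

theorem convexOn_dualObj_sub_two_div_mul_sum_sq (hlam : 0 ≤ lam) (hK : K.PosSemidef) :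
    ConvexOn ℝ (univ.pi fun _ => Icc 0 1)
      fun c => dualObj lam y K c - 2 / n * ∑ i, c i ^ 2 := by
  have hbox : Convex ℝ (univ.pi fun _ : Fin n => Icc (0 : ℝ) 1) :=
    convex_pi fun _ _ => convex_Icc 0 1
  have hent := convexOn_phiEnt_sub_two_mul_sq.sum_comp_apply (ι := Fin n) |>.smul
    (c := (1 / n : ℝ)) (by positivity)
  have hquad := (hK.convexOn_dotProduct_mulVec.comp_linearMap (LinearMap.mulLeft ℝ y)).subset
    (subset_univ _) hbox |>.smul (c := 1 / (2 * lam * (n : ℝ) ^ 2)) (by positivity)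
  refine (hent.add hquad).congr fun c _ => ?_
  simp only [dualObj, Pi.add_apply, smul_eq_mul, Function.comp_apply, LinearMap.mulLeft_apply,
    Finset.sum_sub_distrib, ← Finset.mul_sum]
  rw [show y * c = fun i => y i * c i from rfl]
  ring

theorem strongConvexOn_dualObj (hlam : 0 ≤ lam) (hK : K.PosSemidef) :
    StrongConvexOn (WithLp.ofLp ⁻¹' univ.pi fun _ => Icc 0 1) (4 / n)
      (dualObj lam y K ∘ WithLp.ofLp : EuclideanSpace ℝ (Fin n) → ℝ) := by
  refine strongConvexOn_iff_convex.2 (((convexOn_dualObj_sub_two_div_mul_sum_sq y hlam hK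
    ).comp_linearMap (WithLp.linearEquiv 2 ℝ (Fin n → ℝ)).toLinearMap).congr fun x _ => ?_)
  simp only [Function.comp_apply, LinearEquiv.coe_coe, WithLp.coe_linearEquiv,
    EuclideanSpace.real_norm_sq_eq]
  ring

theorem dualObj_sub_dualObj (G M : Matrix (Fin n) (Fin n) ℝ) (c : Fin n → ℝ) :
    dualObj lam y G c - dualObj lam y M c =
      1 / (2 * lam * (n : ℝ) ^ 2) * ((y * c) ⬝ᵥ ((G - M) *ᵥ (y * c))) := by
  rw [Pi.mul_def]
  simp only [dualObj, sub_mulVec, dotProduct_sub]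
  ring

theorem four_div_mul_sq_e2norm_sub_le_of_isMinOn (hlam : 0 ≤ lam)
    {G M : Matrix (Fin n) (Fin n) ℝ} (hG : G.PosSemidef) (hM : M.PosSemidef) {cG cM : Fin n → ℝ}
    (hcG : ∀ i, cG i ∈ Icc (0 : ℝ) 1)
    (hminG : IsMinOn (dualObj lam y G) {c | ∀ i, c i ∈ Icc (0 : ℝ) 1} cG)
    (hcM : ∀ i, cM i ∈ Icc (0 : ℝ) 1)
    (hminM : IsMinOn (dualObj lam y M) {c | ∀ i, c i ∈ Icc (0 : ℝ) 1} cM) :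
    4 / n * e2norm (cG - cM) ^ 2 ≤
      1 / (2 * lam * (n : ℝ) ^ 2) * ((y * (cM - cG)) ⬝ᵥ ((G - M) *ᵥ (y * (cM + cG)))) := by
  have hsymm : (G - M).IsSymm := isHermitian_iff_isSymm.1 (hG.isHermitian.sub hM.isHermitian)
  have hgrowth := (strongConvexOn_dualObj y hlam hG).mul_sq_norm_sub_le_of_isMinOn
    (strongConvexOn_dualObj y hlam hM) (x := WithLp.toLp 2 cG) (y := WithLp.toLp 2 cM)
    (hminG.comp_mapsTo (fun _ hx i => hx i trivial) rfl)
    (hminM.comp_mapsTo (fun _ hx i => hx i trivial) rfl) (fun i _ => hcG i) (fun i _ => hcM i)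
  simpa only [Function.comp_apply, dualObj_sub_dualObj, ← mul_sub,
    hsymm.dotProduct_mulVec_sub_dotProduct_mulVec, ← WithLp.toLp_sub, ← e2norm_eq_norm_toLp,
    ← mul_add] using hgrowth

end dualObj

/-- Stability of the dual minimizers: if `c_G`, `c_M` are the minimizers over `[0,1]^n`
of `D_G`, `D_M` respectively, then `‖c_G − c_M‖₂ ≤ ‖G − M‖_op / (4λ√n)`. -/
theorem dual_minimizer_stability
    {n : ℕ} (hn : 0 < n)
    (y : Fin n → ℝ) (hy : ∀ i, y i = 1 ∨ y i = -1)
    (lam : ℝ) (hlam : 0 < lam)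
    (G M : Matrix (Fin n) (Fin n) ℝ) (hG : G.PosSemidef) (hM : M.PosSemidef)
    (cG cM : Fin n → ℝ)
    (hcG : (∀ i, cG i ∈ Icc (0:ℝ) 1) ∧
      IsMinOn (dualObj lam y G) {c | ∀ i, c i ∈ Icc (0:ℝ) 1} cG)
    (hcM : (∀ i, cM i ∈ Icc (0:ℝ) 1) ∧
      IsMinOn (dualObj lam y M) {c | ∀ i, c i ∈ Icc (0:ℝ) 1} cM) :
    e2norm (cG - cM) ≤ opNorm (G - M) / (4 * lam * Real.sqrt n) := by
  obtain ⟨hcG, hminG⟩ := hcG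
  obtain ⟨hcM, hminM⟩ := hcM
  have hy₁ : ∀ i, |y i| = 1 := fun i => by rcases hy i with h | h <;> simp [h]
  have hgrowth :=
    four_div_mul_sq_e2norm_sub_le_of_isMinOn y hlam.le hG hM hcG hminG hcM hminM
  have hcross : (y * (cM - cG)) ⬝ᵥ ((G - M) *ᵥ (y * (cM + cG))) ≤
      opNorm (G - M) * (√n * 2) * e2norm (cG - cM) := by
    refine (dotProduct_mulVec_le_opNorm_mul _ _ _).trans ?_
    rw [e2norm_mul_of_abs_eq_one hy₁, e2norm_sub_comm, mul_comm (e2norm _), ← mul_assoc]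
    exact mul_le_mul_of_nonneg_right (mul_le_mul_of_nonneg_left
      (e2norm_mul_add_le hy₁ hcM hcG) (norm_nonneg _)) (e2norm_nonneg _)
  have hr : 0 < √(n : ℝ) := Real.sqrt_pos.2 (by exact_mod_cast hn)
  refine (le_div_of_mul_sq_le_mul (L := 1 / (2 * lam * n ^ 2) * (opNorm (G - M) * (√n * 2)))
    (by positivity) (by unfold opNorm; positivity) (e2norm_nonneg _)
    (hgrowth.trans ?_)).trans_eq ?_
  · exact (mul_le_mul_of_nonneg_left hcross (by positivity)).trans_eq (by ring)
  · have hn' : (n : ℝ) = √(n : ℝ) ^ 2 := (Real.sq_sqrt n.cast_nonneg).symm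
    set r := √(n : ℝ)
    rw [hn']
    field_simp
end

section
/- Let N ∈ ℝ^{r×r} be symmetric positive semidefinite with |N_{ab}| ≤ K* for all a, b, let θ ∈ (0,1)^r, ε ∈ {−1,+1}^r, y_i = ε_{τ(i)}, Y = diag(y), Y_r = diag(ε), M = P N Pᵀ, J = (1/n)·diag(φ''(θ_{τ(1)}), …, φ''(θ_{τ(n)})) + (1/(λn²))·Y M Y, and A_λ = diag(φ''(θ_1), …, φ''(θ_r)) + (1/λ)·Y_r N Q Y_r. Fix a ∈ {1,…,r}, set m_a = (N_{a,τ(i)})_{i=1}^n and r_a = Y_r A_λ^{−1} Y_r (N_{a1}, …, N_{ar})ᵀ. Then Y J^{−1} Y m_a = n·P r_a, and moreover √(∑_{b=1}^r p̂_b·r_{ab}²) ≤ K*/4 and ∑_{b=1}^r p̂_b·|r_{ab}| ≤ K*/4. -/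
open Matrix Set Finset

/-- Second derivative of the binary entropy potential on `(0,1)`:
`φ''(c) = 1/c + 1/(1−c)`. -/
noncomputable def phiEnt'' (c : ℝ) : ℝ := 1 / c + 1 / (1 - c)

/-- Size of the template block `b` under the assignment `τ`. -/
def blockSize {n r : ℕ} (τ : Fin n → Fin r) (b : Fin r) : ℕ :=
  (univ.filter (fun i => τ i = b)).card

/-!
Conjugating by the involutions `Y = diag(ε ∘ τ)` and `Y_r = diag(ε)` removes the signs:
`Y J Y = (1/n) D_τ + (1/(λn²)) P N Pᵀ` and `Y_r A_λ Y_r = D + (1/λ) N Q`, where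
`D = diag(φ''(θ))` and `D_τ = diag(φ''(θ ∘ τ))`. Since `D_τ P = P D` and `Pᵀ P = n Q`, the two
matrices are intertwined, `(Y J Y) (n P) = P (Y_r A_λ Y_r)`, so their inverses are too. Both are
invertible: `Y J Y` is positive definite, and although `D + (1/λ) N Q` is not symmetric,
`Q (D + (1/λ) N Q) = Q D + (1/λ) Q N Q` is positive definite.

For the bounds, pair `(D + (1/λ) N Q) r = N_a` with `Q r`: as `φ'' ≥ 4` and `N ⪰ 0`,
`4 ∑ p̂ r² ≤ ∑ p̂ r N_a ≤ K* ∑ p̂ |r|`, and Cauchy–Schwarz `(∑ p̂ |r|)² ≤ ∑ p̂ r²` closes both.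
-/

theorem four_le_phiEnt'' {c : ℝ} (hc : c ∈ Set.Ioo 0 1) : 4 ≤ phiEnt'' c := by
  obtain ⟨h0, h1⟩ := hc
  have h1' : 0 < 1 - c := by linarith
  rw [phiEnt'', div_add_div _ _ h0.ne' h1'.ne', le_div_iff₀ (by positivity)]
  nlinarith [sq_nonneg (2 * c - 1)]

theorem sqrt_sum_mul_sq_le_and_sum_mul_abs_le {κ : Type*} [Fintype κ] {p x : κ → ℝ} {K : ℝ}
    (hp : ∀ b, 0 ≤ p b) (hp1 : ∑ b, p b = 1) (hK : 0 ≤ K)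
    (h : 4 * ∑ b, p b * x b ^ 2 ≤ K * ∑ b, p b * |x b|) :
    √(∑ b, p b * x b ^ 2) ≤ K / 4 ∧ ∑ b, p b * |x b| ≤ K / 4 := by
  set S := ∑ b, p b * x b ^ 2
  set T := ∑ b, p b * |x b|
  have hS : 0 ≤ S := sum_nonneg fun b _ => mul_nonneg (hp b) (sq_nonneg _)
  have hTS : T ≤ √S := by
    refine Real.le_sqrt_of_sq_le ?_
    have := sum_sq_le_sum_mul_sum_of_sq_le_mul univ (r := fun b => p b * |x b|)
      (fun b _ => hp b) (fun b _ => mul_nonneg (hp b) (sq_nonneg (x b)))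
      (fun b _ => by rw [mul_pow, sq_abs]; nlinarith)
    rwa [hp1, one_mul] at this
  have hSK : √S ≤ K / 4 := by
    nlinarith [Real.sq_sqrt hS, Real.sqrt_nonneg S, mul_le_mul_of_nonneg_left hTS hK]
  exact ⟨hSK, hTS.trans hSK⟩

namespace Matrix

section Conjugation

variable {m R : Type*} [Fintype m] [DecidableEq m] [CommRing R]

theorem diagonal_mul_self_eq_one_of_sign {ε : m → R} (h : ∀ i, ε i = 1 ∨ ε i = -1) :
    diagonal ε * diagonal ε = 1 := by
  rw [diagonal_mul_diagonal, ← diagonal_one]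
  exact congrArg diagonal (funext fun i => by rcases h i with h | h <;> simp [h])

theorem inv_conj_of_mul_self_eq_one {S : Matrix m m R} (hS : S * S = 1) (A : Matrix m m R) :
    (S * A * S)⁻¹ = S * A⁻¹ * S := by
  rw [mul_inv_rev, mul_inv_rev, inv_eq_left_inv hS, mul_assoc]

theorem mulVec_inv_mulVec_conj {S : Matrix m m R} (hS : S * S = 1) (A : Matrix m m R)
    (v : m → R) : S *ᵥ (A⁻¹ *ᵥ (S *ᵥ v)) = (S * A * S)⁻¹ *ᵥ v := by
  rw [inv_conj_of_mul_self_eq_one hS, mulVec_mulVec, mulVec_mulVec]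

theorem conj_add_smul_conj {S D : Matrix m m R} (hS : S * S = 1) (hSD : Commute S D)
    (X : Matrix m m R) (c : R) :
    S * (D + c • (S * X * S)) * S = D + c • X := by
  have hD : S * D * S = D := by rw [hSD.eq, mul_assoc, hS, mul_one]
  have hX : S * (S * X * S) * S = X := by
    rw [← mul_assoc, ← mul_assoc, hS, one_mul, mul_assoc, hS, mul_one]
  rw [mul_add, add_mul, hD, Matrix.mul_smul, Matrix.smul_mul, hX]

theorem inv_mul_eq_mul_inv_of_mul_eq_mul {n : Type*} [Fintype n] [DecidableEq n]
    {J : Matrix m m R} {A : Matrix n n R} {P X : Matrix m n R} (hJ : IsUnit J.det)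
    (hA : IsUnit A.det) (h : J * X = P * A) : J⁻¹ * P = X * A⁻¹ := by
  calc J⁻¹ * P = J⁻¹ * (P * A) * A⁻¹ := by
        rw [Matrix.mul_assoc, Matrix.mul_assoc, mul_nonsing_inv _ hA, Matrix.mul_one]
    _ = X * A⁻¹ := by rw [← h, ← Matrix.mul_assoc, nonsing_inv_mul _ hJ, Matrix.one_mul]

end Conjugation

section Membership

variable {ι κ : Type*} [DecidableEq κ]

def membershipMatrix (R : Type*) [Zero R] [One R] (τ : ι → κ) : Matrix ι κ R :=
  of fun i b => if τ i = b then 1 else 0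

variable {R : Type*} [NonAssocSemiring R] (τ : ι → κ)

theorem membershipMatrix_mulVec [Fintype κ] (v : κ → R) :
    membershipMatrix R τ *ᵥ v = fun i => v (τ i) := by
  ext i
  simp [membershipMatrix, mulVec, dotProduct, ite_mul]

theorem diagonal_comp_mul_membershipMatrix [Fintype ι] [DecidableEq ι] [Fintype κ] (d : κ → R) :
    diagonal (fun i => d (τ i)) * membershipMatrix R τ = membershipMatrix R τ * diagonal d := by
  ext i b
  by_cases h : τ i = b <;> simp [membershipMatrix, h]

theorem transpose_membershipMatrix_mul_self [Fintype ι] :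
    (membershipMatrix R τ)ᵀ * membershipMatrix R τ =
      diagonal fun b => (#{i | τ i = b} : R) := by
  ext b c
  by_cases h : b = c
  · subst h; simp [Matrix.mul_apply, membershipMatrix, sum_ite, filter_filter]
  · simp only [Matrix.mul_apply, membershipMatrix, transpose_apply, of_apply, diagonal_apply_ne _ h]
    refine sum_eq_zero fun i _ => ?_
    split_ifs with hb hc <;> simp_all

end Membership

section BlockReduction

variable {ι κ : Type*} [Fintype ι] [DecidableEq ι] [Fintype κ] [DecidableEq κ]

theorem isUnit_det_diagonal_add_smul_mul_diagonal {d p : κ → ℝ} (hd : ∀ b, 0 < d b)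
    (hp : ∀ b, 0 < p b) {N : Matrix κ κ ℝ} (hN : N.PosSemidef) {c : ℝ} (hc : 0 ≤ c) :
    IsUnit (diagonal d + c • (N * diagonal p)).det := by
  have hpA : diagonal p * (diagonal d + c • (N * diagonal p)) =
      diagonal (fun b => p b * d b) + c • ((diagonal p)ᴴ * N * diagonal p) := by
    simp [Matrix.mul_add, diagonal_mul_diagonal, Matrix.mul_assoc]
  have hpA_pos : (diagonal p * (diagonal d + c • (N * diagonal p))).PosDef := hpA ▸
    (posDef_diagonal_iff.2 fun b => mul_pos (hp b) (hd b)).add_posSemidef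
      ((hN.conjTranspose_mul_mul_same _).smul hc)
  have := (isUnit_iff_isUnit_det _).1 hpA_pos.isUnit
  rw [det_mul] at this
  exact isUnit_of_mul_isUnit_right this

theorem inv_mulVec_mulVec_eq_of_block {n lam : ℝ} (hn : 0 < n) (hlam : 0 < lam)
    {e : ι → ℝ} {d p : κ → ℝ} (he : ∀ i, 0 < e i) (hd : ∀ b, 0 < d b) (hp : ∀ b, 0 < p b)
    {N : Matrix κ κ ℝ} (hN : N.PosSemidef) {P : Matrix ι κ ℝ}
    (hDP : diagonal e * P = P * diagonal d) (hPP : Pᵀ * P = n • diagonal p) (v : κ → ℝ) :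
    ((1 / n) • diagonal e + (1 / (lam * n ^ 2)) • (P * N * Pᵀ))⁻¹ *ᵥ (P *ᵥ v) =
      n • (P *ᵥ ((diagonal d + (1 / lam) • (N * diagonal p))⁻¹ *ᵥ v)) := by
  have hJ : IsUnit ((1 / n) • diagonal e + (1 / (lam * n ^ 2)) • (P * N * Pᵀ)).det := by
    have hJ : ((1 / n) • diagonal e + (1 / (lam * n ^ 2)) • (P * N * Pᵀ)).PosDef := by
      refine ((posDef_diagonal_iff.2 he).smul (by positivity)).add_posSemidef ?_
      rw [← conjTranspose_eq_transpose_of_trivial]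
      exact (hN.mul_mul_conjTranspose_same P).smul (by positivity)
    exact (isUnit_iff_isUnit_det _).1 hJ.isUnit
  have hA := isUnit_det_diagonal_add_smul_mul_diagonal hd hp hN (one_div_pos.2 hlam).le
  have hJP : ((1 / n) • diagonal e + (1 / (lam * n ^ 2)) • (P * N * Pᵀ)) * (n • P) =
      P * (diagonal d + (1 / lam) • (N * diagonal p)) := by
    rw [Matrix.mul_smul, Matrix.add_mul, Matrix.smul_mul, Matrix.smul_mul, hDP,
      Matrix.mul_assoc (P * N), hPP, Matrix.mul_smul, Matrix.mul_add, Matrix.mul_smul,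
      Matrix.mul_assoc]
    match_scalars <;> field_simp
  rw [mulVec_mulVec, inv_mul_eq_mul_inv_of_mul_eq_mul hJ hA hJP, Matrix.smul_mul, smul_mulVec,
    mulVec_mulVec]

theorem four_mul_sum_mul_sq_le {p d x v : κ → ℝ} {N : Matrix κ κ ℝ} {c K : ℝ}
    (hp : ∀ b, 0 ≤ p b) (hd : ∀ b, 4 ≤ d b) (hN : N.PosSemidef) (hc : 0 ≤ c)
    (hv : ∀ b, |v b| ≤ K) (hx : (diagonal d + c • (N * diagonal p)) *ᵥ x = v) :
    4 * ∑ b, p b * x b ^ 2 ≤ K * ∑ b, p b * |x b| := by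
  set w : κ → ℝ := fun b => p b * x b
  have hv' : v = (fun b => d b * x b) + c • (N *ᵥ w) := by
    have hdiag (q : κ → ℝ) : diagonal q *ᵥ x = fun b => q b * x b := funext (mulVec_diagonal q x)
    rw [← hx, add_mulVec, smul_mulVec, ← mulVec_mulVec, hdiag, hdiag]
  have energy : ∑ b, p b * x b * v b = ∑ b, p b * d b * x b ^ 2 + c * (w ⬝ᵥ N *ᵥ w) := by
    simp only [hv', Pi.add_apply, Pi.smul_apply, smul_eq_mul, mul_add, sum_add_distrib,
      dotProduct, mul_sum, w]
    congr 1
    · exact sum_congr rfl fun b _ => by ring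
    · exact sum_congr rfl fun b _ => by ring
  have hquad : 0 ≤ w ⬝ᵥ N *ᵥ w := by simpa using hN.dotProduct_mulVec_nonneg w
  calc 4 * ∑ b, p b * x b ^ 2 ≤ ∑ b, p b * d b * x b ^ 2 := by
        rw [mul_sum]
        refine sum_le_sum fun b _ => ?_
        nlinarith [mul_le_mul_of_nonneg_right (hd b) (mul_nonneg (hp b) (sq_nonneg (x b)))]
    _ ≤ ∑ b, p b * x b * v b := by rw [energy]; nlinarith [mul_nonneg hc hquad]
    _ ≤ K * ∑ b, p b * |x b| := by
        rw [mul_sum]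
        refine sum_le_sum fun b _ => ?_
        calc p b * x b * v b ≤ p b * (|x b| * |v b|) := by
              rw [mul_assoc, ← abs_mul]
              exact mul_le_mul_of_nonneg_left (le_abs_self _) (hp b)
          _ ≤ K * (p b * |x b|) := by
              nlinarith [mul_le_mul_of_nonneg_left (hv b) (mul_nonneg (hp b) (abs_nonneg (x b)))]

end BlockReduction

end Matrix

theorem blockSize_pos {n r : ℕ} {τ : Fin n → Fin r} (hτ : Function.Surjective τ) (b : Fin r) :
    0 < blockSize τ b :=
  let ⟨i, hi⟩ := hτ b
  card_pos.2 ⟨i, by simp [hi]⟩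

theorem sum_blockSize {n r : ℕ} (τ : Fin n → Fin r) : ∑ b, blockSize τ b = n := by
  simp only [blockSize]
  rw [← card_eq_sum_card_fiberwise fun i _ => mem_univ (τ i), card_univ, Fintype.card_fin]

theorem transpose_membershipMatrix_mul_self_eq_smul {n r : ℕ} (hn : 0 < n)
    (τ : Fin n → Fin r) : (membershipMatrix ℝ τ)ᵀ * membershipMatrix ℝ τ =
      (n : ℝ) • diagonal fun b => (blockSize τ b : ℝ) / n := by
  rw [transpose_membershipMatrix_mul_self, ← diagonal_smul]
  congr 1
  ext b
  rw [Pi.smul_apply, smul_eq_mul, blockSize, mul_div_cancel₀ _ (by positivity)]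

theorem block_test_representer_general
    {n r : ℕ} (hn : 0 < n) (lam : ℝ) (hlam : 0 < lam)
    (Kstar : ℝ)
    (τ : Fin n → Fin r) (hτ : Function.Surjective τ)
    (P : Matrix (Fin n) (Fin r) ℝ)
    (hP : ∀ i b, P i b = if τ i = b then 1 else 0)
    (phat : Fin r → ℝ) (hphat : ∀ b, phat b = (blockSize τ b : ℝ) / n)
    (Q : Matrix (Fin r) (Fin r) ℝ) (hQ : Q = Matrix.diagonal phat)
    (N : Matrix (Fin r) (Fin r) ℝ) (hN : N.PosSemidef)
    (hNbdd : ∀ a b, |N a b| ≤ Kstar)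
    (θ : Fin r → ℝ) (hθ : ∀ b, θ b ∈ Ioo (0:ℝ) 1)
    (ε : Fin r → ℝ) (hε : ∀ a, ε a = 1 ∨ ε a = -1)
    (y : Fin n → ℝ) (hy : ∀ i, y i = ε (τ i))
    (Y : Matrix (Fin n) (Fin n) ℝ) (hY : Y = Matrix.diagonal y)
    (Yr : Matrix (Fin r) (Fin r) ℝ) (hYr : Yr = Matrix.diagonal ε)
    (M : Matrix (Fin n) (Fin n) ℝ) (hM : M = P * N * Pᵀ)
    (J : Matrix (Fin n) (Fin n) ℝ)
    (hJ : J = ((1 : ℝ) / n) • Matrix.diagonal (fun i => phiEnt'' (θ (τ i))) +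
      (1 / (lam * (n : ℝ) ^ 2)) • (Y * M * Y))
    (Alam : Matrix (Fin r) (Fin r) ℝ)
    (hAlam : Alam = Matrix.diagonal (fun b => phiEnt'' (θ b)) +
      (1 / lam) • (Yr * N * Q * Yr))
    (a : Fin r)
    (ma : Fin n → ℝ) (hma : ∀ i, ma i = N a (τ i))
    (ra : Fin r → ℝ)
    (hra : ra = Yr *ᵥ (Alam⁻¹ *ᵥ (Yr *ᵥ fun b => N a b))) :
    Y *ᵥ (J⁻¹ *ᵥ (Y *ᵥ ma)) = (n : ℝ) • (P *ᵥ ra) ∧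
    Real.sqrt (∑ b, phat b * (ra b) ^ 2) ≤ Kstar / 4 ∧
    ∑ b, phat b * |ra b| ≤ Kstar / 4 := by
  obtain rfl : P = membershipMatrix ℝ τ := Matrix.ext hP
  obtain rfl : ma = membershipMatrix ℝ τ *ᵥ fun b => N a b := by
    rw [membershipMatrix_mulVec]; exact funext hma
  obtain rfl : phat = fun b => (blockSize τ b : ℝ) / n := funext hphat
  have hn' : (0 : ℝ) < n := Nat.cast_pos.2 hn
  have hp : ∀ b, 0 < (blockSize τ b : ℝ) / n := fun b =>
    div_pos (Nat.cast_pos.2 (blockSize_pos hτ b)) hn'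
  have hp1 : ∑ b, (blockSize τ b : ℝ) / n = 1 := by
    rw [← sum_div, ← Nat.cast_sum, sum_blockSize, div_self hn'.ne']
  have hφ : ∀ b, 4 ≤ phiEnt'' (θ b) := fun b => four_le_phiEnt'' (hθ b)
  have hφ_pos : ∀ b, 0 < phiEnt'' (θ b) := fun b => four_pos.trans_le (hφ b)
  have hY2 : Y * Y = 1 := hY ▸ diagonal_mul_self_eq_one_of_sign fun i => hy i ▸ hε (τ i)
  have hYr2 : Yr * Yr = 1 := hYr ▸ diagonal_mul_self_eq_one_of_sign hε
  rw [mulVec_inv_mulVec_conj hYr2, hAlam, hQ, Matrix.mul_assoc Yr N,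
    conj_add_smul_conj hYr2 (hYr ▸ commute_diagonal _ _)] at hra
  subst hra
  have hA := isUnit_det_diagonal_add_smul_mul_diagonal hφ_pos hp hN (one_div_pos.2 hlam).le
  refine ⟨?_, sqrt_sum_mul_sq_le_and_sum_mul_abs_le (fun b => (hp b).le) hp1
    ((abs_nonneg _).trans (hNbdd a a)) (four_mul_sum_mul_sq_le (fun b => (hp b).le) hφ hN
      (one_div_pos.2 hlam).le (hNbdd a) ?_)⟩
  · rw [mulVec_inv_mulVec_conj hY2, hJ, hM,
      conj_add_smul_conj hY2 (hY ▸ (commute_diagonal _ _).smul_right _),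
      inv_mulVec_mulVec_eq_of_block hn' hlam (fun i => hφ_pos (τ i)) hφ_pos hp hN
        (diagonal_comp_mul_membershipMatrix τ fun b => phiEnt'' (θ b))
        (transpose_membershipMatrix_mul_self_eq_smul hn τ)]
  · rw [mulVec_mulVec, mul_nonsing_inv _ hA, one_mulVec]

/-- Block test-representer identity `Y J⁻¹ Y m_a = n·P r_a` and the weighted
bounds `√(∑_b p̂_b r_{ab}²) ≤ K*/4` and `∑_b p̂_b |r_{ab}| ≤ K*/4`. -/
theorem block_test_representer
    {n r : ℕ} (hn : 0 < n) (hr : 0 < r) (lam : ℝ) (hlam : 0 < lam)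
    (Kstar : ℝ) (hKstar : 0 < Kstar)
    (τ : Fin n → Fin r) (hτ : Function.Surjective τ)
    (P : Matrix (Fin n) (Fin r) ℝ)
    (hP : ∀ i b, P i b = if τ i = b then 1 else 0)
    (phat : Fin r → ℝ) (hphat : ∀ b, phat b = (blockSize τ b : ℝ) / n)
    (Q : Matrix (Fin r) (Fin r) ℝ) (hQ : Q = Matrix.diagonal phat)
    (N : Matrix (Fin r) (Fin r) ℝ) (hN : N.PosSemidef)
    (hNbdd : ∀ a b, |N a b| ≤ Kstar)
    (θ : Fin r → ℝ) (hθ : ∀ b, θ b ∈ Ioo (0:ℝ) 1)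
    (ε : Fin r → ℝ) (hε : ∀ a, ε a = 1 ∨ ε a = -1)
    (y : Fin n → ℝ) (hy : ∀ i, y i = ε (τ i))
    (Y : Matrix (Fin n) (Fin n) ℝ) (hY : Y = Matrix.diagonal y)
    (Yr : Matrix (Fin r) (Fin r) ℝ) (hYr : Yr = Matrix.diagonal ε)
    (M : Matrix (Fin n) (Fin n) ℝ) (hM : M = P * N * Pᵀ)
    (J : Matrix (Fin n) (Fin n) ℝ)
    (hJ : J = ((1 : ℝ) / n) • Matrix.diagonal (fun i => phiEnt'' (θ (τ i))) +
      (1 / (lam * (n : ℝ) ^ 2)) • (Y * M * Y))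
    (Alam : Matrix (Fin r) (Fin r) ℝ)
    (hAlam : Alam = Matrix.diagonal (fun b => phiEnt'' (θ b)) +
      (1 / lam) • (Yr * N * Q * Yr))
    (a : Fin r)
    (ma : Fin n → ℝ) (hma : ∀ i, ma i = N a (τ i))
    (ra : Fin r → ℝ)
    (hra : ra = Yr *ᵥ (Alam⁻¹ *ᵥ (Yr *ᵥ fun b => N a b))) :
    Y *ᵥ (J⁻¹ *ᵥ (Y *ᵥ ma)) = (n : ℝ) • (P *ᵥ ra) ∧
    Real.sqrt (∑ b, phat b * (ra b) ^ 2) ≤ Kstar / 4 ∧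
    ∑ b, phat b * |ra b| ≤ Kstar / 4 :=
  block_test_representer_general hn lam hlam Kstar τ hτ P hP phat hphat Q hQ N hN hNbdd θ hθ ε hε y
    hy Y hY Yr hYr M hM J hJ Alam hAlam a ma hma ra hra
end
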